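/- There exists a constant C > 0 such that for every positive integer p not divisible by 3, | 2·min{ √(g((2π/p)·⌊p/3⌋)), √(g((2π/p)·⌈p/3⌉)) } − 2π/(√3·p) | ≤ C/p². In particular, the quantity 2·min{√(g((2π/p)⌊p/3⌋)), √(g((2π/p)⌈p/3⌉))} equals 2π/(√3 p) + O(p⁻²) as p → ∞ over p not divisible by 3. -/

import Mathlib

open Real

/-- `g(θ) = 3 + 2cos θ − 4cos(θ/2)`. -/
noncomputable def gFun (θ : ℝ) : ℝ := 3 + 2 * cos θ - 4 * cos (θ / 2)

/-!
Since `3 + 2 cos θ - 4 cos (θ/2) = (2 cos (θ/2) - 1)²`, we have `√(g θ) = |2 cos (θ/2) - 1|`,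
which vanishes at `θ/2 = π/3` with slope `√3`. For `p = 3m + r` with `r ∈ {1, 2}` the two
half-angles `π m / p` and `π (m + 1) / p` lie at distances `r π/(3p)` and `(3 - r) π/(3p)` from
`π/3`, i.e. one at distance `δ = π/(3p)` and the other at `2δ`. The first gives
`2√(g) = 2√3 δ + O(δ²) = 2π/(√3 p) + O(p⁻²)`, the second is larger up to `O(δ²)`.
-/

lemma gFun_eq_sq (θ : ℝ) : gFun θ = (2 * cos (θ / 2) - 1) ^ 2 := by
  have h : cos θ = 2 * cos (θ / 2) ^ 2 - 1 := by
    rw [← cos_two_mul, mul_div_cancel₀ θ two_ne_zero]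
  rw [gFun, h]
  ring

lemma sqrt_gFun (θ : ℝ) : √(gFun θ) = |2 * cos (θ / 2) - 1| := by
  rw [gFun_eq_sq, sqrt_sq_eq_abs]

lemma abs_two_mul_cos_pi_div_three_add_sub_one_add_le (x : ℝ) :
    |2 * cos (π / 3 + x) - 1 + √3 * x| ≤ x ^ 2 / 2 + √3 * |x| ^ 3 / 6 := by
  have hexpand : 2 * cos (π / 3 + x) - 1 + √3 * x = (cos x - 1) + √3 * (x - sin x) := by
    rw [cos_add, cos_pi_div_three, sin_pi_div_three]
    ring
  have hcos : |cos x - 1| ≤ x ^ 2 / 2 := by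
    rw [abs_sub_comm, abs_of_nonneg (sub_nonneg.mpr (cos_le_one x))]
    linarith [one_sub_sq_div_two_le_cos (x := x)]
  have hsin : |√3 * (x - sin x)| ≤ √3 * (|x| ^ 3 / 6) := by
    rw [abs_mul, abs_of_nonneg (sqrt_nonneg 3)]
    exact mul_le_mul_of_nonneg_left (abs_sub_sin_le x) (sqrt_nonneg 3)
  calc |2 * cos (π / 3 + x) - 1 + √3 * x|
      ≤ |cos x - 1| + |√3 * (x - sin x)| := hexpand ▸ abs_add_le _ _
    _ ≤ x ^ 2 / 2 + √3 * |x| ^ 3 / 6 := by linarith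

lemma abs_sqrt_gFun_sub_le {x : ℝ} (hx : |x| ≤ 3) :
    |√(gFun (2 * (π / 3 + x))) - √3 * (|x|)| ≤ 2 * x ^ 2 := by
  have hs3 : √3 < 2 := by
    rw [sqrt_lt' two_pos]
    norm_num
  have hcubic : √3 * |x| ^ 3 / 6 ≤ x ^ 2 := by
    have : √3 * |x| ≤ 6 := by nlinarith [abs_nonneg x]
    rw [← sq_abs x]
    nlinarith [sq_nonneg |x|]
  rw [sqrt_gFun, mul_div_cancel_left₀ _ two_ne_zero]
  calc |(|2 * cos (π / 3 + x) - 1|) - √3 * (|x|)|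
      = |(|2 * cos (π / 3 + x) - 1|) - (|-(√3 * x)|)| := by
        rw [abs_neg, abs_mul, abs_of_nonneg (sqrt_nonneg 3)]
    _ ≤ |2 * cos (π / 3 + x) - 1 + √3 * x| := by
        simpa only [sub_neg_eq_add] using abs_abs_sub_abs_le_abs_sub _ (-(√3 * x))
    _ ≤ 2 * x ^ 2 := by
        linarith [abs_two_mul_cos_pi_div_three_add_sub_one_add_le x, sq_nonneg x]

lemma abs_min_sub_le_of_abs_sub_le {a b t ε : ℝ} (ha : |a - t| ≤ ε) (hb : t - ε ≤ b) :
    |min a b - t| ≤ ε := by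
  rw [abs_le] at ha ⊢
  constructor
  · linarith [le_min (show t - ε ≤ a by linarith) hb]
  · linarith [min_le_left a b]

lemma abs_two_mul_min_sqrt_gFun_sub_le {δ x y : ℝ} (hδ : δ ≤ 3 / 2) (hx : |x| = δ)
    (hy : |y| = 2 * δ) :
    |2 * min (√(gFun (2 * (π / 3 + x)))) (√(gFun (2 * (π / 3 + y)))) - 2 * (√3 * δ)|
      ≤ 16 * δ ^ 2 := by
  have hδ0 : 0 ≤ δ := hx ▸ abs_nonneg x
  have hnear := abs_sqrt_gFun_sub_le (x := x) (by linarith)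
  have hfar := abs_sqrt_gFun_sub_le (x := y) (by linarith)
  rw [← sq_abs x, hx] at hnear
  rw [← sq_abs y, hy] at hfar
  rw [abs_le] at hnear hfar
  rw [mul_min_of_nonneg _ _ zero_le_two]
  refine abs_min_sub_le_of_abs_sub_le (abs_le.mpr ⟨?_, ?_⟩) ?_ <;>
    nlinarith [mul_nonneg (sqrt_nonneg 3) hδ0, sq_nonneg δ]

lemma floor_natCast_div_three (p : ℕ) :
    ((⌊(p : ℝ) / 3⌋ : ℤ) : ℝ) = ((p : ℝ) - (p % 3 : ℕ)) / 3 := by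
  have hdiv : (p : ℝ) = 3 * (p / 3 : ℕ) + (p % 3 : ℕ) := by
    exact_mod_cast (Nat.div_add_mod p 3).symm
  have hr : ((p % 3 : ℕ) : ℝ) < 3 := by exact_mod_cast Nat.mod_lt p three_pos
  have hfloor : ⌊(p : ℝ) / 3⌋ = ((p / 3 : ℕ) : ℤ) := by
    rw [Int.floor_eq_iff, Int.cast_natCast]
    constructor <;> linarith [Nat.cast_nonneg (α := ℝ) (p % 3)]
  rw [hfloor, Int.cast_natCast, hdiv]
  ring

lemma ceil_natCast_div_three {p : ℕ} (hp : ¬ 3 ∣ p) :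
    ((⌈(p : ℝ) / 3⌉ : ℤ) : ℝ) = ((p : ℝ) + (3 - (p % 3 : ℕ))) / 3 := by
  have hnotint : (p : ℝ) / 3 ∉ Set.range ((↑) : ℤ → ℝ) := by
    rintro ⟨k, hk⟩
    have hpk : (p : ℤ) = 3 * k := by
      have : (p : ℝ) = 3 * k := by rw [hk]; ring
      exact_mod_cast this
    exact hp (Int.natCast_dvd_natCast.mp ⟨k, hpk⟩)
  rw [(Int.ceil_eq_floor_add_one_iff_notMem _).mpr hnotint]
  push_cast
  rw [floor_natCast_div_three]
  ring

/-- There exists `C > 0` such that for every positive integer `p` not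
divisible by `3`,
`| 2·min{√(g((2π/p)⌊p/3⌋)), √(g((2π/p)⌈p/3⌉))} − 2π/(√3·p) | ≤ C/p²`; i.e. the
HOMO-LUMO gap of the family `X_{p,q}` equals `2π/(√3·p) + O(p⁻²)`. -/
theorem stmt_17 :
    ∃ C > (0 : ℝ), ∀ p : ℕ, 0 < p → ¬ (3 ∣ p) →
      |2 * min (Real.sqrt (gFun (2 * π / p * (⌊(p : ℝ) / 3⌋ : ℤ))))
               (Real.sqrt (gFun (2 * π / p * (⌈(p : ℝ) / 3⌉ : ℤ))))
        - 2 * π / (Real.sqrt 3 * p)| ≤ C / (p : ℝ) ^ 2 := by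
  refine ⟨32, by norm_num, fun p hp h3 => ?_⟩
  have hp0 : (0 : ℝ) < p := by exact_mod_cast hp
  set δ := π / (3 * p) with hδ
  have hδ0 : 0 ≤ δ := by positivity
  have hδ1 : δ ≤ 3 / 2 := by
    rw [hδ, div_le_iff₀ (by positivity)]
    nlinarith [pi_lt_four, (Nat.one_le_cast (α := ℝ)).mpr hp]
  have hfloor : 2 * π / p * (⌊(p : ℝ) / 3⌋ : ℤ) = 2 * (π / 3 + -((p % 3 : ℕ) * δ)) := by
    rw [floor_natCast_div_three, hδ]
    field_simp
    ring
  have hceil : 2 * π / p * (⌈(p : ℝ) / 3⌉ : ℤ) = 2 * (π / 3 + (3 - (p % 3 : ℕ)) * δ) := by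
    rw [ceil_natCast_div_three h3, hδ]
    field_simp
  have htarget : 2 * π / (√3 * p) = 2 * (√3 * δ) := by
    rw [hδ]
    field_simp
    rw [sq_sqrt zero_le_three]
  have hC : 16 * δ ^ 2 ≤ 32 / (p : ℝ) ^ 2 := by
    rw [hδ]
    field_simp
    nlinarith [pi_pos, pi_lt_four]
  rw [hfloor, hceil, htarget]
  refine le_trans ?_ hC
  rcases (by omega : p % 3 = 1 ∨ p % 3 = 2) with h | h <;> rw [h] <;> norm_num
  · exact abs_two_mul_min_sqrt_gFun_sub_le hδ1
      (by simp [abs_of_nonneg hδ0]) (by simp [abs_of_nonneg hδ0])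
  · rw [min_comm]
    exact abs_two_mul_min_sqrt_gFun_sub_le hδ1
      (by simp [abs_of_nonneg hδ0]) (by simp [abs_of_nonneg hδ0])
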